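/- arXiv:1411.3880 — 2 statements merged into one kernel-verified Lean document; each statement's English description precedes it below -/
import Mathlib

section
/- Let P=(S,A,δ,F,s0) be a probabilistic finite automaton and let G be the reduction POMDP built from P, with target set T={target}. If there exists a finite word w ∈ A* that is accepted by P with probability strictly greater than 1/2, then the optimal cost optCost in G is -∞; that is, for every real number τ < 0 there exists an almost-sure winning strategy σ for Reach(T) in G with Val(σ) < τ. -/
open Finset Filter
open scoped Classical

set_option linter.unusedSectionVars false
set_option linter.unnecessarySeqFocus false

noncomputable section

/-- A finite history of a play: the current state together with the
(reversed) list of past steps; an entry `(a, s')` means: the action `a`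
was taken from the state `s'` (leading to the next recorded state). -/
abbrev Hist (S A : Type) := S × List (A × S)

/-- The observation–action sequence of a history. -/
def obsHist {S A Z : Type} (O : S → Z) (h : Hist S A) : Z × List (A × Z) :=
  (O h.1, h.2.map fun p => (p.1, O p.2))

/-- An observation-based (randomized, history-dependent) strategy. -/
structure Strategy (S A Z : Type) [Fintype A] (O : S → Z) where
  act : Hist S A → A → ℝ
  act_nonneg : ∀ h a, 0 ≤ act h a
  act_sum : ∀ h, ∑ a, act h a = 1
  obsBased : ∀ h h', obsHist O h = obsHist O h' → act h = act h'

/-- A partially observable Markov decision process. -/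
structure POMDP (S A Z : Type) [Fintype S] [Fintype A] [Fintype Z] where
  δ : S → A → S → ℝ
  δ_nonneg : ∀ s a s', 0 ≤ δ s a s'
  δ_sum : ∀ s a, ∑ s', δ s a s' = 1
  obs : S → Z
  init : S → ℝ
  init_nonneg : ∀ s, 0 ≤ init s
  init_sum : ∑ s, init s = 1
  init_obs : ∀ s s', 0 < init s → 0 < init s' → obs s = obs s'

namespace POMDP

variable {S A Z : Type} [Fintype S] [Fintype A] [Fintype Z]

/-- The target set `T` consists of absorbing states. -/
def Absorbing (M : POMDP S A Z) (T : Set S) : Prop :=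
  ∀ t ∈ T, ∀ a, M.δ t a t = 1

/-- Probability that after `n` steps the process has followed exactly the
history `(s, l)` (so `l` has length `n`). -/
def hprobAux (M : POMDP S A Z) (σ : Strategy S A Z M.obs) : ℕ → S → List (A × S) → ℝ
  | 0, s, l => if l = [] then M.init s else 0
  | n+1, s, l =>
    match l with
    | [] => 0
    | (a, s') :: rest => hprobAux M σ n s' rest * σ.act (s', rest) a * M.δ s' a s

def hprob (M : POMDP S A Z) (σ : Strategy S A Z M.obs) (n : ℕ) (h : Hist S A) : ℝ :=
  M.hprobAux σ n h.1 h.2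

/-- The state sequence of a history visits the set `T`. -/
def visitsT (T : Set S) (h : Hist S A) : Prop :=
  h.1 ∈ T ∨ ∃ p ∈ h.2, p.2 ∈ T

/-- Probability of reaching `T` within the first `n` steps. -/
def probReachBy (M : POMDP S A Z) (T : Set S) (σ : Strategy S A Z M.obs) (n : ℕ) : ℝ :=
  ∑' h : Hist S A, if visitsT T h then M.hprob σ n h else 0

/-- Probability of the reachability objective `Reach(T)`. -/
def probReach (M : POMDP S A Z) (T : Set S) (σ : Strategy S A Z M.obs) : ℝ :=
  ⨆ n, M.probReachBy T σ n

/-- The strategy `σ` is almost-sure winning for `Reach(T)`. -/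
def AlmostSure (M : POMDP S A Z) (T : Set S) (σ : Strategy S A Z M.obs) : Prop :=
  M.probReach T σ = 1

/-- Accumulated cost along a history. -/
def totalCostAux (c : S → A → ℝ) : S → List (A × S) → ℝ
  | _, [] => 0
  | _, (a, s') :: rest => totalCostAux c s' rest + c s' a

def totalCostH (c : S → A → ℝ) (h : Hist S A) : ℝ := totalCostAux c h.1 h.2

/-- Expected total cost of the first `n` steps, i.e. `E[Total_{n-1}]`
(in particular `E[Total_k] = expTotalSteps M c σ (k+1)`). -/
def expTotalSteps (M : POMDP S A Z) (c : S → A → ℝ) (σ : Strategy S A Z M.obs) (n : ℕ) : ℝ :=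
  ∑' h : Hist S A, M.hprob σ n h * totalCostH c h

/-- The value `Val(σ) = E[Total]` of a strategy, as the limit (limsup) of the
expected costs of the finite prefixes. -/
def Val (M : POMDP S A Z) (c : S → A → ℝ) (σ : Strategy S A Z M.obs) : EReal :=
  Filter.limsup (fun n => ((M.expTotalSteps c σ n : ℝ) : EReal)) Filter.atTop

/-- `optCost`: the infimum of the values of almost-sure winning strategies. -/
def optCost (M : POMDP S A Z) (T : Set S) (c : S → A → ℝ) : EReal :=
  ⨅ σ : {σ : Strategy S A Z M.obs // M.AlmostSure T σ}, M.Val c σ.1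

end POMDP

/-- A probabilistic finite automaton. -/
structure PFA (S A : Type) [Fintype S] [Fintype A] where
  δ : S → A → S → ℝ
  δ_nonneg : ∀ s a s', 0 ≤ δ s a s'
  δ_sum : ∀ s a, ∑ s', δ s a s' = 1
  final : Finset S
  s0 : S

def dirac {X : Type} [DecidableEq X] (x : X) : X → ℝ := fun y => if y = x then 1 else 0

lemma dirac_nonneg {X : Type} [DecidableEq X] (x y : X) : 0 ≤ dirac x y := by
  unfold dirac; split_ifs <;> norm_num

lemma dirac_sum {X : Type} [Fintype X] [DecidableEq X] (x : X) : ∑ y, dirac x y = 1 := by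
  simp [dirac]

namespace PFA

variable {S A : Type} [Fintype S] [Fintype A] [DecidableEq S] [DecidableEq A]

/-- One step of the forward distribution of the PFA. -/
def stepD (P : PFA S A) (d : S → ℝ) (a : A) : S → ℝ := fun s' => ∑ s, d s * P.δ s a s'

/-- Distribution over states after reading the word `w` from `s0`. -/
def wordDist (P : PFA S A) (w : List A) : S → ℝ := w.foldl P.stepD (dirac P.s0)

/-- Probability that the word `w` is accepted (run ends in a final state). -/
def accProb (P : PFA S A) (w : List A) : ℝ := ∑ s ∈ P.final, P.wordDist w s

/-- States of the reduction POMDP: `(s,1)` = `inl (s, true)`, `(s,-1)` = `inl (s, false)`,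
`good`, `bad`, `target`, `losing` = `inr 0,1,2,3`. -/
abbrev RSt (S : Type) := S × Bool ⊕ Fin 4

/-- Actions of the reduction POMDP: the PFA letters, and `# = inr 0`,
`$ = inr 1`, `√ = inr 2`. -/
abbrev RAct (A : Type) := A ⊕ Fin 3

variable (S) in
def stGood : RSt S := Sum.inr 0
variable (S) in
def stBad : RSt S := Sum.inr 1
variable (S) in
def stTarget : RSt S := Sum.inr 2
variable (S) in
def stLosing : RSt S := Sum.inr 3

def embedPos (p : S → ℝ) : RSt S → ℝ
  | Sum.inl (s, true) => p s
  | Sum.inl (_, false) => 0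
  | Sum.inr _ => 0

lemma embedPos_nonneg {p : S → ℝ} (hp : ∀ s, 0 ≤ p s) (t : RSt S) : 0 ≤ embedPos p t := by
  rcases t with ⟨s, _ | _⟩ | i <;> simp [embedPos] <;> exact hp s

lemma embedPos_sum (p : S → ℝ) : ∑ t, embedPos p t = ∑ s, p s := by
  rw [Fintype.sum_sum_type, Fintype.sum_prod_type]
  have h1 : ∀ s : S, ∑ b : Bool, embedPos p (Sum.inl (s, b)) = p s := by
    intro s; rw [Fintype.sum_bool]; simp [embedPos]
  have h2 : ∑ i : Fin 4, embedPos p (Sum.inr i) = 0 := by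
    simp [embedPos]
  rw [h2, Finset.sum_congr rfl fun s _ => h1 s, add_zero]

/-- Transition function of the reduction POMDP. -/
def redδ (P : PFA S A) : RSt S → RAct A → RSt S → ℝ
  | Sum.inl (s, true), Sum.inr j =>
      if j = 1 then dirac (Sum.inl (s, false))
      else if j = 2 then (if s = P.s0 then dirac (stTarget S) else dirac (stLosing S))
      else dirac (stLosing S)
  | Sum.inl (_, true), Sum.inl _ => dirac (stLosing S)
  | Sum.inl (s, false), Sum.inl a => embedPos (P.δ s a)
  | Sum.inl (s, false), Sum.inr j =>
      if j = 0 then (if s ∈ P.final then dirac (stGood S) else dirac (stBad S))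
      else dirac (stLosing S)
  | Sum.inr i, Sum.inl _ =>
      if i = 2 then dirac (stTarget S) else dirac (stLosing S)
  | Sum.inr i, Sum.inr j =>
      if i = 2 then dirac (stTarget S)
      else if i = 3 then dirac (stLosing S)
      else if j = 0 then dirac (Sum.inl (P.s0, true)) else dirac (stLosing S)

lemma redδ_nonneg (P : PFA S A) (st : RSt S) (act : RAct A) (t : RSt S) :
    0 ≤ redδ P st act t := by
  rcases st with ⟨s, _ | _⟩ | i <;> rcases act with a | j <;>
    simp only [redδ] <;> (try split_ifs) <;>
    first
      | exact dirac_nonneg _ _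
      | exact embedPos_nonneg (P.δ_nonneg s a) t

lemma redδ_sum (P : PFA S A) (st : RSt S) (act : RAct A) :
    ∑ t, redδ P st act t = 1 := by
  rcases st with ⟨s, _ | _⟩ | i <;> rcases act with a | j <;>
    simp only [redδ] <;> (try split_ifs) <;>
    first
      | exact dirac_sum _
      | (rw [embedPos_sum]; exact P.δ_sum s a)

/-- The cost function of the reduction POMDP (cost of the source state,
charged on all outgoing transitions). -/
def costRed : RSt S → RAct A → ℝ
  | Sum.inl (_, true), _ => 1
  | Sum.inl (_, false), _ => -1
  | Sum.inr i, _ => if i = 0 then -1 else if i = 1 then 1 else if i = 3 then 1 else 0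

/-- The reduction POMDP built from the PFA `P`: single observation,
initial state `(s0, 1)`. -/
def redPOMDP (P : PFA S A) : POMDP (RSt S) (RAct A) Unit where
  δ := redδ P
  δ_nonneg := redδ_nonneg P
  δ_sum := redδ_sum P
  obs := fun _ => ()
  init := dirac (Sum.inl (P.s0, true))
  init_nonneg := dirac_nonneg _
  init_sum := dirac_sum _
  init_obs := fun _ _ _ _ => rfl

variable (S) in
/-- The target set of the reduction POMDP. -/
def TRed : Set (RSt S) := {stTarget S}

end PFA

/-- The memory state of a finite-memory strategy after a history. -/
def memAfter {S A Z Mem : Type} (O : S → Z) (σu : Mem → Z → A → Mem) (m0 : Mem) :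
    S → List (A × S) → Mem
  | _, [] => m0
  | s, (a, s') :: rest => σu (memAfter O σu m0 s' rest) (O s) a

/-- A strategy is pure finite-memory if it is induced by a deterministic
finite-memory structure `(σu, σn, Mem, m0)`. -/
def IsPureFinMem {S A Z : Type} [Fintype A] (O : S → Z) (σ : Strategy S A Z O) : Prop :=
  ∃ (Mem : Type) (_ : Finite Mem) (σu : Mem → Z → A → Mem) (σn : Mem → A) (m0 : Mem),
    ∀ (h : Hist S A) (a : A),
      σ.act h a = if a = σn (memAfter O σu m0 h.1 h.2) then 1 else 0

/-! Fix a word `w` accepted with probability `p > 1/2` and put `L = 2|w| + 3`. The strategy plays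
rounds of `L` steps: in `(s₀, 1)` it plays `√` with probability `ε` and `$` otherwise, then feeds
`w` to the automaton by alternating letters and `$`, and finally plays `#` twice, passing through
`good` or `bad` back to `(s₀, 1)`. Every round reaches the target with probability `ε`, so the
strategy is almost-sure winning. Along a round that goes on after its first step the costs of the
states `(s, 1)` and `(s, -1)` cancel and `good`/`bad` cost `1 - 2p` in expectation, so a round
entered with probability `(1 - ε)^q` contributes `(1 - ε)^q (1 - 2p (1 - ε))`. Summing the
geometric series, the value is at most `(1 - 2p (1 - ε)) / ε + L`, which tends to `-∞` as
`ε → 0` because `1 - 2p < 0`. -/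

open Matrix

namespace Nat

lemma add_one_ceilDiv {n L : ℕ} (hL : 0 < L) : (n + 1) ⌈/⌉ L = n / L + 1 := by
  rw [ceilDiv_eq_add_pred_div, show n + 1 + L - 1 = n + L by omega, Nat.add_div_right _ hL]

lemma ceilDiv_eq_div_of_mod_eq_zero {n L : ℕ} (hL : 0 < L) (h : n % L = 0) : n ⌈/⌉ L = n / L := by
  obtain ⟨q, rfl⟩ := Nat.dvd_of_mod_eq_zero h
  rw [ceilDiv_eq_add_pred_div, Nat.mul_div_cancel_left q hL,
    show L * q + L - 1 = L - 1 + L * q by omega, Nat.add_mul_div_left _ _ hL,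
    Nat.div_eq_of_lt (by omega), zero_add]

lemma ceilDiv_eq_div_add_one_of_mod_ne_zero {n L : ℕ} (hL : 0 < L) (h : n % L ≠ 0) :
    n ⌈/⌉ L = n / L + 1 := by
  obtain ⟨m, rfl⟩ : ∃ m, n = m + 1 := ⟨n - 1, by rcases n with _ | n <;> simp_all⟩
  rw [add_one_ceilDiv hL, Nat.succ_div_of_not_dvd fun hd => h (Nat.mod_eq_zero_of_dvd hd)]

end Nat

def listsOfLength (X : Type) [Fintype X] : ℕ → Finset (List X)
  | 0 => {[]}
  | n + 1 => (univ ×ˢ listsOfLength X n).map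
      ⟨fun p => p.1 :: p.2, fun _ _ h => Prod.ext (List.cons.inj h).1 (List.cons.inj h).2⟩

lemma mem_listsOfLength {X : Type} [Fintype X] {n : ℕ} {l : List X} :
    l ∈ listsOfLength X n ↔ l.length = n := by
  induction n generalizing l with
  | zero => simp [listsOfLength]
  | succ n ih =>
    simp only [listsOfLength, Finset.mem_map, mem_product, mem_univ, true_and, ih]
    constructor
    · rintro ⟨⟨a, l⟩, hl, rfl⟩
      exact congrArg (· + 1) hl
    · cases l with
      | nil => simp
      | cons a l => exact fun hl => ⟨(a, l), by simpa using hl, rfl⟩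

namespace POMDP

def histsOfLength (S A : Type) [Fintype S] [Fintype A] (n : ℕ) : Finset (Hist S A) :=
  univ ×ˢ listsOfLength (A × S) n

variable {S A Z : Type} [Fintype S] [Fintype A] [Fintype Z]

lemma mem_histsOfLength {n : ℕ} {h : Hist S A} : h ∈ histsOfLength S A n ↔ h.2.length = n := by
  simp [histsOfLength, mem_listsOfLength]

variable (M : POMDP S A Z)

def transMatrix (a : A) : Matrix S S ℝ := fun s s' => M.δ s a s'

def timeStrat (f : ℕ → A → ℝ) (hf₀ : ∀ n a, 0 ≤ f n a) (hf₁ : ∀ n, ∑ a, f n a = 1) :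
    Strategy S A Z M.obs where
  act h := f h.2.length
  act_nonneg h := hf₀ _
  act_sum h := hf₁ _
  obsBased h h' hobs := by
    simpa [obsHist] using congrArg (fun o : Z × List (A × Z) => f o.2.length) hobs

variable {M} in
lemma Absorbing.δ_eq_zero {T : Set S} (hT : M.Absorbing T) {t s : S} (ht : t ∈ T) (a : A)
    (hs : s ≠ t) : M.δ t a s = 0 := by
  have hrest : ∑ x ∈ univ.erase t, M.δ t a x = 0 := by
    have := M.δ_sum t a
    rw [← add_sum_erase _ _ (mem_univ t), hT t ht a] at this
    linarith
  exact (sum_eq_zero_iff_of_nonneg fun x _ => M.δ_nonneg t a x).1 hrest s (by simp [hs])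

lemma optCost_eq_bot_of_forall_val_lt {T : Set S} {c : S → A → ℝ}
    (h : ∀ τ : ℝ, ∃ σ, M.AlmostSure T σ ∧ M.Val c σ < τ) : M.optCost T c = ⊥ := by
  refine iInf_eq_bot.2 fun b hb => ?_
  obtain ⟨τ, -, hτ⟩ := EReal.exists_between_coe_real hb
  obtain ⟨σ, hσ, hval⟩ := h τ
  exact ⟨⟨σ, hσ⟩, hval.trans hτ⟩

variable (σ : Strategy S A Z M.obs)

lemma hprob_eq_zero_of_length_ne {n : ℕ} {h : Hist S A} (hn : h.2.length ≠ n) :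
    M.hprob σ n h = 0 := by
  obtain ⟨s, l⟩ := h
  induction n generalizing s l with
  | zero => simp_all [hprob, hprobAux]
  | succ n ih =>
    rcases l with _ | ⟨⟨a, s'⟩, l⟩
    · rfl
    · simp only [hprob, hprobAux] at ih ⊢
      rw [ih s' l (by simpa using hn), zero_mul, zero_mul]

lemma tsum_hprob_mul_eq_sum (n : ℕ) (G : Hist S A → ℝ) :
    ∑' h, M.hprob σ n h * G h = ∑ h ∈ histsOfLength S A n, M.hprob σ n h * G h :=
  tsum_eq_sum fun _ hh => by
    rw [M.hprob_eq_zero_of_length_ne σ (mt mem_histsOfLength.2 hh), zero_mul]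

lemma sum_hprob_succ (n : ℕ) (G : Hist S A → ℝ) :
    ∑ h ∈ histsOfLength S A (n + 1), M.hprob σ (n + 1) h * G h =
      ∑ s, ∑ h ∈ histsOfLength S A n, ∑ a,
        M.hprob σ n h * σ.act h a * M.δ h.1 a s * G (s, (a, h.1) :: h.2) := by
  simp_rw [histsOfLength, sum_product, listsOfLength, sum_map, sum_product,
    Fintype.sum_prod_type]
  refine sum_congr rfl fun s _ => ?_
  rw [sum_comm]
  exact sum_congr rfl fun _ _ => sum_comm

def stateDist (n : ℕ) (s : S) : ℝ :=
  ∑ l ∈ listsOfLength (A × S) n, M.hprob σ n (s, l)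

lemma sum_hprob_mul_fst (n : ℕ) (g : S → ℝ) :
    ∑ h ∈ histsOfLength S A n, M.hprob σ n h * g h.1 = M.stateDist σ n ⬝ᵥ g := by
  simp [histsOfLength, sum_product, dotProduct, stateDist, sum_mul]

lemma stateDist_zero : M.stateDist σ 0 = M.init := by
  ext s
  simp [stateDist, listsOfLength, hprob, hprobAux]

lemma stateDist_timeStrat_succ (f : ℕ → A → ℝ) (hf₀ : ∀ n a, 0 ≤ f n a)
    (hf₁ : ∀ n, ∑ a, f n a = 1) (n : ℕ) :
    M.stateDist (M.timeStrat f hf₀ hf₁) (n + 1) =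
      ∑ a, f n a • (M.stateDist (M.timeStrat f hf₀ hf₁) n ᵥ* M.transMatrix a) := by
  set σ := M.timeStrat f hf₀ hf₁
  ext s'
  rw [← dotProduct_single_one (M.stateDist σ (n + 1)) s', ← sum_hprob_mul_fst, sum_hprob_succ,
    Fintype.sum_eq_single s' fun s hs => by simp [hs]]
  simp only [Pi.single_eq_same, mul_one, Finset.sum_apply, Pi.smul_apply, smul_eq_mul, vecMul,
    ← sum_hprob_mul_fst, mul_sum]
  rw [sum_comm]
  refine sum_congr rfl fun a _ => sum_congr rfl fun h hh => ?_
  rw [show σ.act h = f n from congrArg f (mem_histsOfLength.1 hh)]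
  simp only [transMatrix]
  ring

lemma expTotalSteps_succ {c : S → A → ℝ} {k : S → ℝ} (hc : ∀ s a, c s a = k s) (n : ℕ) :
    M.expTotalSteps c σ (n + 1) = M.expTotalSteps c σ n + M.stateDist σ n ⬝ᵥ k := by
  rw [expTotalSteps, expTotalSteps, tsum_hprob_mul_eq_sum, tsum_hprob_mul_eq_sum, sum_hprob_succ,
    ← sum_hprob_mul_fst, ← sum_add_distrib, sum_comm]
  refine sum_congr rfl fun h _ => ?_
  have hcost : ∀ a s, totalCostH c (s, (a, h.1) :: h.2) = totalCostH c h + k h.1 := fun a s => by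
    simp [totalCostH, totalCostAux, hc]
  simp only [hcost]
  rw [sum_comm]
  simp only [← sum_mul, ← mul_sum, M.δ_sum, mul_one, σ.act_sum]
  ring

lemma expTotalSteps_eq_sum_range {c : S → A → ℝ} {k : S → ℝ} (hc : ∀ s a, c s a = k s) (n : ℕ) :
    M.expTotalSteps c σ n = ∑ j ∈ range n, M.stateDist σ j ⬝ᵥ k := by
  induction n with
  | zero =>
    simp [expTotalSteps, tsum_hprob_mul_eq_sum, histsOfLength, listsOfLength, totalCostH,
      totalCostAux]
  | succ n ih => rw [M.expTotalSteps_succ σ hc, ih, sum_range_succ]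

lemma mem_of_visitsT_of_hprob_ne_zero {T : Set S} (hT : M.Absorbing T) {n : ℕ} {h : Hist S A}
    (hvis : visitsT T h) (hne : M.hprob σ n h ≠ 0) : h.1 ∈ T := by
  obtain ⟨s, l⟩ := h
  induction n generalizing s l with
  | zero =>
    obtain rfl : l = [] := by by_contra hl; simp [hprob, hprobAux, hl] at hne
    simpa [visitsT] using hvis
  | succ n ih =>
    rcases l with _ | ⟨⟨a, s'⟩, l⟩
    · exact absurd rfl hne
    simp only [hprob, hprobAux, ne_eq, mul_eq_zero, not_or] at hne
    obtain ⟨⟨hprev, -⟩, hδ⟩ := hne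
    rcases hvis with hs | ⟨p, hp, hpT⟩
    · exact hs
    have hs' : s' ∈ T := by
      rcases List.mem_cons.1 hp with rfl | hp
      · exact hpT
      · exact ih s' l (Or.inr ⟨p, hp, hpT⟩) hprev
    by_contra hs
    exact hδ (hT.δ_eq_zero hs' a fun e => hs (e ▸ hs'))

lemma probReachBy_eq_dotProduct {T : Set S} (hT : M.Absorbing T) (n : ℕ) :
    M.probReachBy T σ n = M.stateDist σ n ⬝ᵥ T.indicator 1 := by
  have hvis : ∀ h, (if visitsT T h then M.hprob σ n h else 0) =
      M.hprob σ n h * T.indicator 1 h.1 := fun h => by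
    by_cases hne : M.hprob σ n h = 0
    · simp [hne]
    by_cases hh : h.1 ∈ T
    · simp [hh, visitsT]
    · simp [hh, mt (M.mem_of_visitsT_of_hprob_ne_zero σ hT · hne) hh]
  rw [probReachBy, tsum_congr hvis, tsum_hprob_mul_eq_sum, sum_hprob_mul_fst]

lemma almostSure_of_tendsto {T : Set S} (hle : ∀ n, M.probReachBy T σ n ≤ 1)
    (hlim : Tendsto (M.probReachBy T σ) atTop (nhds 1)) : M.AlmostSure T σ :=
  le_antisymm (ciSup_le hle)
    (le_of_tendsto' hlim fun n => le_ciSup ⟨1, Set.forall_mem_range.2 hle⟩ n)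

lemma val_le_of_tendsto {c : S → A → ℝ} {g : ℕ → ℝ} {x : ℝ}
    (hle : ∀ᶠ n in atTop, M.expTotalSteps c σ n ≤ g n) (hg : Tendsto g atTop (nhds x)) :
    M.Val c σ ≤ x := by
  rw [Val, ← ((continuous_coe_real_ereal.tendsto x).comp hg).limsup_eq]
  exact limsup_le_limsup (hle.mono fun n hn => EReal.coe_le_coe hn)

end POMDP

lemma dirac_eq_single {X : Type} [DecidableEq X] (x : X) : dirac x = Pi.single x 1 := by
  ext y
  simp [dirac, Pi.single_apply]

namespace PFA

def stateCost {S : Type} : RSt S → ℝ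
  | Sum.inl (_, true) => 1
  | Sum.inl (_, false) => -1
  | Sum.inr i => ![-1, 1, 0, 1] i

lemma costRed_eq_stateCost {S A : Type} (s : RSt S) (a : RAct A) : costRed s a = stateCost s := by
  rcases s with ⟨_, _ | _⟩ | i
  · rfl
  · rfl
  · fin_cases i <;> rfl

section Automaton

variable {S A : Type} [Fintype S] [Fintype A] (P : PFA S A)

lemma sum_stepD (d : S → ℝ) (a : A) : ∑ s, P.stepD d a s = ∑ s, d s := by
  simp only [stepD]
  rw [sum_comm]
  simp [← mul_sum, P.δ_sum]

lemma stepD_nonneg {d : S → ℝ} (hd : ∀ s, 0 ≤ d s) (a : A) (s : S) : 0 ≤ P.stepD d a s :=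
  sum_nonneg fun x _ => mul_nonneg (hd x) (P.δ_nonneg x a s)

lemma sum_foldl_stepD (l : List A) (d : S → ℝ) : ∑ s, l.foldl P.stepD d s = ∑ s, d s := by
  induction l generalizing d with
  | nil => rfl
  | cons a l ih => rw [List.foldl_cons, ih, sum_stepD]

lemma foldl_stepD_nonneg (l : List A) {d : S → ℝ} (hd : ∀ s, 0 ≤ d s) (s : S) :
    0 ≤ l.foldl P.stepD d s := by
  induction l generalizing d with
  | nil => exact hd s
  | cons a l ih => exact ih (P.stepD_nonneg hd a)

lemma embedPos_stepD (d : S → ℝ) (a : A) :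
    embedPos (P.stepD d a) = ∑ s, d s • embedPos (P.δ s a) := by
  ext t
  rcases t with ⟨s, _ | _⟩ | i <;> simp [embedPos, stepD, Finset.sum_apply]

variable [DecidableEq S]

lemma sum_wordDist (w : List A) : ∑ s, P.wordDist w s = 1 := by
  rw [wordDist, sum_foldl_stepD, dirac_sum]

lemma wordDist_nonneg (w : List A) (s : S) : 0 ≤ P.wordDist w s :=
  P.foldl_stepD_nonneg w (dirac_nonneg P.s0) s

lemma accProb_nonneg (w : List A) : 0 ≤ P.accProb w :=
  sum_nonneg fun s _ => P.wordDist_nonneg w s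

lemma accProb_le_one (w : List A) : P.accProb w ≤ 1 :=
  P.sum_wordDist w ▸ sum_le_univ_sum_of_nonneg (P.wordDist_nonneg w)

lemma sum_compl_final_wordDist (w : List A) :
    ∑ s ∈ P.finalᶜ, P.wordDist w s = 1 - P.accProb w := by
  rw [← P.sum_wordDist w, ← sum_add_sum_compl P.final, accProb, add_sub_cancel_left]

lemma wordDist_take_succ {w : List A} {i : ℕ} {a : A} (h : w[i]? = some a) :
    P.wordDist (w.take (i + 1)) = P.stepD (P.wordDist (w.take i)) a := by
  rw [wordDist, List.take_add_one, h, Option.toList_some, List.foldl_append]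
  rfl

end Automaton

variable {S A : Type} [Fintype S] [Fintype A] [DecidableEq S] (P : PFA S A) (w : List A)

def embedNeg (d : S → ℝ) : RSt S → ℝ := ∑ s, d s • Pi.single (Sum.inl (s, false)) 1

lemma embedPos_eq_sum (d : S → ℝ) : embedPos d = ∑ s, d s • Pi.single (Sum.inl (s, true)) 1 := by
  ext t
  rcases t with ⟨s, _ | _⟩ | i <;> simp [embedPos, Finset.sum_apply, Pi.single_apply]

def roundDist (r : ℕ) : RSt S → ℝ :=
  if r = 2 * w.length + 2 then
    P.accProb w • Pi.single (stGood S) 1 + (1 - P.accProb w) • Pi.single (stBad S) 1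
  else if r % 2 = 0 then embedPos (P.wordDist (w.take (r / 2)))
  else embedNeg (P.wordDist (w.take (r / 2)))

lemma roundDist_of_even {r : ℕ} (hr : r < 2 * w.length + 2) (h2 : r % 2 = 0) :
    roundDist P w r = embedPos (P.wordDist (w.take (r / 2))) := by
  rw [roundDist, if_neg hr.ne, if_pos h2]

lemma roundDist_of_odd {r : ℕ} (h2 : r % 2 = 1) :
    roundDist P w r = embedNeg (P.wordDist (w.take (r / 2))) := by
  rw [roundDist, if_neg (by omega), if_neg (by omega)]

lemma roundDist_zero : roundDist P w 0 = Pi.single (Sum.inl (P.s0, true)) 1 := by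
  rw [roundDist_of_even P w (by omega) rfl]
  simp [wordDist, embedPos_eq_sum, dirac_eq_single, Pi.single_apply]

lemma roundDist_apply_target (r : ℕ) : roundDist P w r (stTarget S) = 0 := by
  unfold roundDist
  split_ifs <;> simp [embedPos, embedNeg, Finset.sum_apply, stGood, stBad, stTarget]

def roundCost (r : ℕ) : ℝ :=
  if r = 2 * w.length + 2 then 1 - 2 * P.accProb w else (-1) ^ r

lemma roundDist_dotProduct_stateCost (r : ℕ) :
    roundDist P w r ⬝ᵥ stateCost = roundCost P w r := by
  unfold roundDist roundCost
  split_ifs with hlast h2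
  · simp [add_dotProduct, stateCost, stGood, stBad]
    ring
  · simp [embedPos_eq_sum, sum_dotProduct, stateCost, sum_wordDist,
      (Nat.even_iff.2 h2).neg_one_pow]
  · simp [embedNeg, sum_dotProduct, stateCost, sum_wordDist,
      (Nat.odd_iff.2 (Nat.mod_two_ne_zero.1 h2)).neg_one_pow]

lemma roundCost_le_one (r : ℕ) : roundCost P w r ≤ 1 := by
  unfold roundCost
  split_ifs
  · linarith [P.accProb_nonneg w]
  · rcases neg_one_pow_eq_or ℝ r with h | h <;> rw [h] <;> norm_num

lemma sum_roundCost_succ :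
    ∑ r ∈ range (2 * w.length + 2), roundCost P w (r + 1) = -2 * P.accProb w := by
  rw [sum_range_succ, roundCost, if_pos rfl]
  have hodd : ∑ r ∈ range (2 * w.length + 1), roundCost P w (r + 1) = -1 := by
    rw [sum_congr rfl fun r hr => by rw [roundCost, if_neg (by simp at hr; omega)]]
    simp [pow_succ, neg_one_geom_sum]
  rw [hodd]
  ring

def expStepCost (ε : ℝ) (j : ℕ) : ℝ :=
  (1 - ε) ^ (j ⌈/⌉ (2 * w.length + 3)) * roundCost P w (j % (2 * w.length + 3))

lemma sum_expStepCost_round (ε : ℝ) (q : ℕ) :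
    ∑ r ∈ range (2 * w.length + 3), expStepCost P w ε ((2 * w.length + 3) * q + r) =
      (1 - 2 * P.accProb w * (1 - ε)) * (1 - ε) ^ q := by
  have hL : 0 < 2 * w.length + 3 := by omega
  rw [sum_range_succ']
  have hfirst : expStepCost P w ε ((2 * w.length + 3) * q + 0) = (1 - ε) ^ q := by
    rw [expStepCost, add_zero, Nat.ceilDiv_eq_div_of_mod_eq_zero hL (Nat.mul_mod_right _ _),
      Nat.mul_div_cancel_left _ hL, Nat.mul_mod_right, roundCost, if_neg (by omega), pow_zero,
      mul_one]
  have hrest : ∀ r ∈ range (2 * w.length + 2),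
      expStepCost P w ε ((2 * w.length + 3) * q + (r + 1)) =
        (1 - ε) ^ (q + 1) * roundCost P w (r + 1) := fun r hr => by
    rw [mem_range] at hr
    rw [expStepCost, ← add_assoc, Nat.add_one_ceilDiv hL, Nat.mul_add_div hL,
      Nat.div_eq_of_lt (by omega), add_zero, add_assoc, Nat.mul_add_mod_self_left,
      Nat.mod_eq_of_lt (by omega)]
  rw [sum_congr rfl hrest, ← mul_sum, sum_roundCost_succ, hfirst]
  ring

lemma sum_range_mul_expStepCost (ε : ℝ) (Q : ℕ) :
    ∑ j ∈ range ((2 * w.length + 3) * Q), expStepCost P w ε j =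
      (1 - 2 * P.accProb w * (1 - ε)) * ∑ q ∈ range Q, (1 - ε) ^ q := by
  induction Q with
  | zero => simp
  | succ Q ih =>
    rw [Nat.mul_succ, sum_range_add, ih, sum_expStepCost_round, sum_range_succ, mul_add]

lemma expStepCost_le_one {ε : ℝ} (hε₀ : 0 ≤ ε) (hε₁ : ε ≤ 1) (j : ℕ) :
    expStepCost P w ε j ≤ 1 := by
  have h₀ := pow_nonneg (sub_nonneg.2 hε₁) (j ⌈/⌉ (2 * w.length + 3))
  have h₁ := pow_le_one₀ (n := j ⌈/⌉ (2 * w.length + 3)) (sub_nonneg.2 hε₁) (by linarith)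
  have h := roundCost_le_one P w (j % (2 * w.length + 3))
  rw [expStepCost]
  nlinarith [mul_nonneg h₀ (sub_nonneg.2 h)]

lemma sum_range_expStepCost_le {ε : ℝ} (hε₀ : 0 ≤ ε) (hε₁ : ε ≤ 1) (n : ℕ) :
    ∑ j ∈ range n, expStepCost P w ε j ≤
      (1 - 2 * P.accProb w * (1 - ε)) * ∑ q ∈ range (n / (2 * w.length + 3)), (1 - ε) ^ q +
        (2 * w.length + 3) := by
  have hL : 0 < 2 * w.length + 3 := by omega
  conv_lhs => rw [← Nat.div_add_mod n (2 * w.length + 3), sum_range_add, sum_range_mul_expStepCost]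
  gcongr
  calc _ ≤ ∑ _j ∈ range (n % (2 * w.length + 3)), (1 : ℝ) :=
        sum_le_sum fun j _ => expStepCost_le_one P w hε₀ hε₁ _
    _ ≤ 2 * w.length + 3 := by
        simp only [sum_const, card_range, nsmul_eq_mul, mul_one]
        exact_mod_cast (Nat.mod_lt n hL).le

/-- The play has met `n ⌈/⌉ (2|w| + 3)` round starts before time `n`, and each of them moves it to
the target with probability `ε`. -/
def redStratDist (ε : ℝ) (n : ℕ) : RSt S → ℝ :=
  (1 - ε) ^ (n ⌈/⌉ (2 * w.length + 3)) • roundDist P w (n % (2 * w.length + 3)) +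
    (1 - (1 - ε) ^ (n ⌈/⌉ (2 * w.length + 3))) • Pi.single (stTarget S) 1

variable [DecidableEq A]

@[simp]
lemma row_redPOMDP_transMatrix (b : RAct A) (s : RSt S) :
    ((redPOMDP P).transMatrix b).row s = redδ P s b := rfl

lemma embedPos_vecMul_dollar (d : S → ℝ) :
    embedPos d ᵥ* (redPOMDP P).transMatrix (Sum.inr 1) = embedNeg d := by
  simp [embedPos_eq_sum, embedNeg, sum_vecMul, smul_vecMul, redδ, dirac_eq_single]

lemma embedNeg_vecMul_letter (d : S → ℝ) (a : A) :
    embedNeg d ᵥ* (redPOMDP P).transMatrix (Sum.inl a) = embedPos (P.stepD d a) := by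
  simp [embedPos_stepD, embedNeg, sum_vecMul, smul_vecMul, redδ]

lemma embedNeg_vecMul_sharp (d : S → ℝ) :
    embedNeg d ᵥ* (redPOMDP P).transMatrix (Sum.inr 0) =
      (∑ s ∈ P.final, d s) • Pi.single (stGood S) 1 +
        (∑ s ∈ P.finalᶜ, d s) • Pi.single (stBad S) 1 := by
  simp only [embedNeg, sum_vecMul, smul_vecMul, single_one_vecMul, row_redPOMDP_transMatrix, redδ,
    if_pos, dirac_eq_single, sum_smul]
  rw [← sum_add_sum_compl P.final]
  congr 1 <;> refine sum_congr rfl fun s hs => ?_ <;> simp_all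

lemma goodBad_vecMul_sharp (p q : ℝ) :
    (p • Pi.single (stGood S) 1 + q • Pi.single (stBad S) 1) ᵥ* (redPOMDP P).transMatrix (Sum.inr 0)
      = (p + q) • Pi.single (Sum.inl (P.s0, true)) 1 := by
  simp [add_vecMul, smul_vecMul, redδ, stGood, stBad, dirac_eq_single, add_smul]

lemma start_vecMul_check :
    Pi.single (Sum.inl (P.s0, true)) 1 ᵥ* (redPOMDP P).transMatrix (Sum.inr 2) =
      Pi.single (stTarget S) 1 := by
  simp [redδ, dirac_eq_single]

lemma target_vecMul (b : RAct A) :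
    Pi.single (stTarget S) 1 ᵥ* (redPOMDP P).transMatrix b = Pi.single (stTarget S) 1 := by
  rcases b with a | j <;> simp [redδ, stTarget, dirac_eq_single]

def roundAction (r : ℕ) : RAct A :=
  if r % 2 = 1 then
    match w[r / 2]? with
    | some a => Sum.inl a
    | none => Sum.inr 0
  else if r < 2 * w.length + 2 then Sum.inr 1 else Sum.inr 0

lemma roundDist_vecMul_roundAction {r : ℕ} (hr : r < 2 * w.length + 3) :
    roundDist P w r ᵥ* (redPOMDP P).transMatrix (roundAction w r) =
      roundDist P w ((r + 1) % (2 * w.length + 3)) := by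
  rcases Nat.lt_or_ge r (2 * w.length + 2) with hr' | hr'
  · rw [Nat.mod_eq_of_lt (by omega : r + 1 < 2 * w.length + 3)]
    rcases Nat.mod_two_eq_zero_or_one r with h2 | h2
    · rw [roundDist_of_even P w hr' h2, roundAction, if_neg (by omega), if_pos hr',
        embedPos_vecMul_dollar, roundDist_of_odd P w (by omega), show (r + 1) / 2 = r / 2 by omega]
    rcases Nat.lt_or_ge (r / 2) w.length with hk | hk
    · have hget : w[r / 2]? = some w[r / 2] := List.getElem?_eq_getElem hk
      simp only [roundDist_of_odd P w h2, roundAction, if_pos h2, hget]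
      rw [embedNeg_vecMul_letter, roundDist_of_even P w (by omega) (by omega),
        show (r + 1) / 2 = r / 2 + 1 by omega, P.wordDist_take_succ hget]
    · obtain rfl : r = 2 * w.length + 1 := by omega
      have hget : w[(2 * w.length + 1) / 2]? = none := List.getElem?_eq_none (by omega)
      simp only [roundDist_of_odd P w h2, roundAction, if_pos h2, hget]
      rw [embedNeg_vecMul_sharp, roundDist, if_pos rfl,
        show (2 * w.length + 1) / 2 = w.length by omega, List.take_length,
        sum_compl_final_wordDist, accProb]
  · obtain rfl : r = 2 * w.length + 2 := by omega
    rw [roundDist, if_pos rfl, roundAction, if_neg (by omega), if_neg (by omega),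
      goodBad_vecMul_sharp, Nat.mod_self, roundDist_zero, add_sub_cancel, one_smul]

def roundActDist (ε : ℝ) (r : ℕ) : RAct A → ℝ :=
  if r = 0 then ε • Pi.single (Sum.inr 2) 1 + (1 - ε) • Pi.single (Sum.inr 1) 1
  else Pi.single (roundAction w r) 1

omit [Fintype A] in
lemma roundActDist_nonneg {ε : ℝ} (hε₀ : 0 ≤ ε) (hε₁ : ε ≤ 1) (r : ℕ) (b : RAct A) :
    0 ≤ roundActDist w ε r b := by
  have hsingle : ∀ c : RAct A, 0 ≤ (Pi.single c 1 : RAct A → ℝ) b := fun c => by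
    by_cases h : b = c <;> simp [h]
  unfold roundActDist
  split_ifs
  · exact add_nonneg (mul_nonneg hε₀ (hsingle _)) (mul_nonneg (sub_nonneg.2 hε₁) (hsingle _))
  · exact hsingle _

lemma sum_roundActDist (ε : ℝ) (r : ℕ) : ∑ b, roundActDist w ε r b = 1 := by
  unfold roundActDist
  split_ifs <;> simp only [Pi.add_apply, Pi.smul_apply, smul_eq_mul, sum_add_distrib, ← mul_sum,
    sum_pi_single', mem_univ, if_true] <;> ring

def redStrat {ε : ℝ} (hε₀ : 0 ≤ ε) (hε₁ : ε ≤ 1) :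
    Strategy (RSt S) (RAct A) Unit (redPOMDP P).obs :=
  (redPOMDP P).timeStrat (fun n => roundActDist w ε (n % (2 * w.length + 3)))
    (fun _ => roundActDist_nonneg w hε₀ hε₁ _) (fun _ => sum_roundActDist w ε _)

lemma stateDist_redStrat {ε : ℝ} (hε₀ : 0 ≤ ε) (hε₁ : ε ≤ 1) (n : ℕ) :
    (redPOMDP P).stateDist (redStrat P w hε₀ hε₁) n = redStratDist P w ε n := by
  have hL : 0 < 2 * w.length + 3 := by omega
  induction n with
  | zero =>
    rw [POMDP.stateDist_zero]
    simp [redStratDist, roundDist_zero, redPOMDP, dirac_eq_single]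
  | succ n ih =>
    unfold redStrat at ih ⊢
    rw [POMDP.stateDist_timeStrat_succ, ih]
    by_cases h0 : n % (2 * w.length + 3) = 0
    · have hmod : (n + 1) % (2 * w.length + 3) = 1 := by
        rw [← Nat.mod_add_mod, h0, Nat.mod_eq_of_lt (by omega)]
      have hceil : (n + 1) ⌈/⌉ (2 * w.length + 3) = n ⌈/⌉ (2 * w.length + 3) + 1 := by
        rw [Nat.add_one_ceilDiv hL, Nat.ceilDiv_eq_div_of_mod_eq_zero hL h0]
      have hdollar : roundDist P w 0 ᵥ* (redPOMDP P).transMatrix (Sum.inr 1) = roundDist P w 1 := by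
        simpa [roundAction, Nat.mod_eq_of_lt (by omega : 1 < 2 * w.length + 3)] using
          roundDist_vecMul_roundAction P w hL
      have hcheck : roundDist P w 0 ᵥ* (redPOMDP P).transMatrix (Sum.inr 2) =
          Pi.single (stTarget S) 1 := by
        rw [roundDist_zero, start_vecMul_check]
      simp only [roundActDist, if_pos h0, Pi.add_apply, Pi.smul_apply, smul_eq_mul, add_smul,
        mul_smul, sum_add_distrib, ← smul_sum, Pi.single_apply, ite_smul, one_smul, zero_smul,
        sum_ite_eq', mem_univ, if_true]
      simp only [redStratDist, h0, add_vecMul, smul_vecMul, target_vecMul, hdollar, hcheck, hmod,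
        hceil, pow_succ]
      module
    · have hceil : (n + 1) ⌈/⌉ (2 * w.length + 3) = n ⌈/⌉ (2 * w.length + 3) := by
        rw [Nat.add_one_ceilDiv hL, Nat.ceilDiv_eq_div_add_one_of_mod_ne_zero hL h0]
      simp only [roundActDist, if_neg h0, Pi.single_apply, ite_smul, one_smul, zero_smul,
        sum_ite_eq', mem_univ, if_true]
      simp only [redStratDist, add_vecMul, smul_vecMul, target_vecMul,
        roundDist_vecMul_roundAction P w (Nat.mod_lt n hL), Nat.mod_add_mod, hceil]

lemma expTotalSteps_redStrat {ε : ℝ} (hε₀ : 0 ≤ ε) (hε₁ : ε ≤ 1) (n : ℕ) :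
    (redPOMDP P).expTotalSteps costRed (redStrat P w hε₀ hε₁) n =
      ∑ j ∈ range n, expStepCost P w ε j := by
  rw [POMDP.expTotalSteps_eq_sum_range _ _ costRed_eq_stateCost]
  refine sum_congr rfl fun j _ => ?_
  simp [stateDist_redStrat, redStratDist, expStepCost, add_dotProduct,
    roundDist_dotProduct_stateCost, stateCost, stTarget]

lemma absorbing_TRed : (redPOMDP P).Absorbing (TRed S) := by
  rintro t rfl b
  rcases b with a | j <;> simp [redPOMDP, redδ, stTarget, dirac]

lemma probReachBy_redStrat {ε : ℝ} (hε₀ : 0 ≤ ε) (hε₁ : ε ≤ 1) (n : ℕ) :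
    (redPOMDP P).probReachBy (TRed S) (redStrat P w hε₀ hε₁) n =
      1 - (1 - ε) ^ (n ⌈/⌉ (2 * w.length + 3)) := by
  have hind : (TRed S).indicator 1 = Pi.single (stTarget S) (1 : ℝ) := by
    ext t
    by_cases ht : t = stTarget S <;> simp [TRed, ht]
  rw [POMDP.probReachBy_eq_dotProduct _ _ (absorbing_TRed P), hind, dotProduct_single_one,
    stateDist_redStrat]
  simp [redStratDist, roundDist_apply_target]

lemma almostSure_redStrat {ε : ℝ} (hε₀ : 0 < ε) (hε₁ : ε ≤ 1) :
    (redPOMDP P).AlmostSure (TRed S) (redStrat P w hε₀.le hε₁) := by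
  have hL : 0 < 2 * w.length + 3 := by omega
  have hrounds : Tendsto (· ⌈/⌉ (2 * w.length + 3)) atTop atTop :=
    tendsto_atTop_mono (fun _ => Nat.div_le_div_right (by omega))
      (Nat.tendsto_div_const_atTop hL.ne')
  refine POMDP.almostSure_of_tendsto _ _ (fun n => ?_) ?_
  · rw [probReachBy_redStrat]
    linarith [pow_nonneg (sub_nonneg.2 hε₁) (n ⌈/⌉ (2 * w.length + 3))]
  · rw [funext (probReachBy_redStrat P w hε₀.le hε₁)]
    simpa using ((tendsto_pow_atTop_nhds_zero_of_lt_one (sub_nonneg.2 hε₁) (by linarith)).comp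
      hrounds).const_sub 1

lemma val_redStrat_le {ε : ℝ} (hε₀ : 0 < ε) (hε₁ : ε < 1) :
    (redPOMDP P).Val costRed (redStrat P w hε₀.le hε₁.le) ≤
      (((1 - 2 * P.accProb w * (1 - ε)) / ε + (2 * w.length + 3) : ℝ) : EReal) := by
  have hL : 0 < 2 * w.length + 3 := by omega
  have hgeom := (hasSum_geometric_of_lt_one (sub_nonneg.2 hε₁.le) (by linarith)).tendsto_sum_nat
  rw [sub_sub_cancel, ← one_div] at hgeom
  have hlim := ((hgeom.comp (Nat.tendsto_div_const_atTop hL.ne')).const_mul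
    (1 - 2 * P.accProb w * (1 - ε))).add_const (2 * w.length + 3 : ℝ)
  rw [mul_one_div] at hlim
  refine POMDP.val_le_of_tendsto _ _ (Eventually.of_forall fun n => ?_) hlim
  rw [expTotalSteps_redStrat]
  exact sum_range_expStepCost_le P w hε₀.le hε₁.le n

lemma exists_almostSure_val_lt (hw : 1 / 2 < P.accProb w) (τ : ℝ) :
    ∃ σ, (redPOMDP P).AlmostSure (TRed S) σ ∧ (redPOMDP P).Val costRed σ < τ := by
  set p := P.accProb w
  set D : ℝ := 2 * p + (2 * w.length + 3) + 1 + |τ| with hD_def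
  have hD : 0 < D := by linarith [abs_nonneg τ, hD_def]
  -- this choice makes the bound of `val_redStrat_le` equal to `-1 - |τ|`
  set ε := (2 * p - 1) / D
  have hε₀ : 0 < ε := div_pos (by linarith) hD
  have hε₁ : ε < 1 := (div_lt_one hD).2 (by linarith [abs_nonneg τ, hD_def])
  refine ⟨redStrat P w hε₀.le hε₁.le, almostSure_redStrat P w hε₀ hε₁.le,
    (val_redStrat_le P w hε₀ hε₁).trans_lt (EReal.coe_lt_coe_iff.2 ?_)⟩
  have hval : (1 - 2 * p * (1 - ε)) / ε = 2 * p - D := by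
    rw [div_eq_iff hε₀.ne']
    simp only [ε]
    field_simp
    ring
  rw [hval]
  linarith [neg_abs_le τ]

end PFA

/-- If some word is accepted by the PFA `P` with probability
strictly greater than `1/2`, then the optimal cost of the reduction POMDP
is `-∞`: for every `τ < 0` there is an almost-sure winning strategy of
value below `τ`. -/
theorem optCost_eq_bot_of_accProb_gt_half
    {S A : Type} [Fintype S] [Fintype A] [DecidableEq S] [DecidableEq A]
    (P : PFA S A) (hw : ∃ w : List A, 1 / 2 < P.accProb w) :
    (PFA.redPOMDP P).optCost (PFA.TRed S) PFA.costRed = ⊥ ∧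
    ∀ τ : ℝ, τ < 0 →
      ∃ σ : Strategy (PFA.RSt S) (PFA.RAct A) Unit (PFA.redPOMDP P).obs,
        (PFA.redPOMDP P).AlmostSure (PFA.TRed S) σ ∧
        (PFA.redPOMDP P).Val PFA.costRed σ < (τ : EReal) := by
  obtain ⟨w, hw⟩ := hw
  have hval := P.exists_almostSure_val_lt w hw
  exact ⟨POMDP.optCost_eq_bot_of_forall_val_lt _ hval, fun τ _ => hval τ⟩
end
end

section
/- Let G be a POMDP with absorbing target set T and with Supp(λ0) ∈ BeliefWin(G,T), and let σ be a strategy. If with positive probability under σ a finite history w is reached whose belief-support U belongs to BeliefWin(G,T) and σ plays after w some action a ∉ Allow(U) with positive probability, then σ is not almost-sure winning for Reach(T). -/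
open Finset Filter
open scoped Classical

set_option linter.unusedSectionVars false

noncomputable section

namespace POMDP

variable {S A Z : Type} [Fintype S] [Fintype A] [Fintype Z]

/-- Uniform distribution over a finite set of states. -/
def uniformS (U : Finset S) : S → ℝ := fun s => if s ∈ U then ((U.card : ℝ))⁻¹ else 0

lemma uniformS_nonneg (U : Finset S) (s : S) : 0 ≤ uniformS U s := by
  unfold uniformS; split_ifs <;> positivity

lemma uniformS_sum (U : Finset S) (h : U.Nonempty) : ∑ s, uniformS U s = 1 := by
  unfold uniformS
  rw [Finset.sum_ite_mem, Finset.univ_inter, Finset.sum_const, nsmul_eq_mul,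
    mul_inv_cancel₀]
  exact_mod_cast Finset.card_ne_zero.mpr h

lemma uniformS_mem {U : Finset S} {s : S} (h : 0 < uniformS U s) : s ∈ U := by
  by_contra hc; simp [uniformS, hc] at h

/-- The POMDP `M` with the initial distribution replaced by the uniform
distribution over `U`. -/
def reinit (M : POMDP S A Z) (U : Finset S) (hU : U.Nonempty)
    (hobs : ∀ s ∈ U, ∀ s' ∈ U, M.obs s = M.obs s') : POMDP S A Z :=
  { M with
    init := uniformS U
    init_nonneg := uniformS_nonneg U
    init_sum := uniformS_sum U hU
    init_obs := fun s s' hs hs' => hobs s (uniformS_mem hs) s' (uniformS_mem hs') }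

/-- The POMDP `M` with the initial distribution replaced by the Dirac
distribution at `s0`. -/
def resetDirac (M : POMDP S A Z) (s0 : S) : POMDP S A Z :=
  { M with
    init := fun s => if s = s0 then 1 else 0
    init_nonneg := by intro s; split_ifs <;> norm_num
    init_sum := by simp
    init_obs := by
      intro s s' hs hs'
      have h1 : s = s0 := by by_contra hc; simp [hc] at hs
      have h2 : s' = s0 := by by_contra hc; simp [hc] at hs'
      rw [h1, h2] }

/-- The set of almost-sure winning belief-supports: those `U` from which
(with the uniform initial distribution on `U`) some strategy wins
`Reach(T)` almost-surely. -/
def BeliefWin (M : POMDP S A Z) (T : Set S) : Set (Finset S) :=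
  {U | ∃ (hU : U.Nonempty) (hobs : ∀ s ∈ U, ∀ s' ∈ U, M.obs s = M.obs s'),
      ∃ σ : Strategy S A Z M.obs, (M.reinit U hU hobs).AlmostSure T σ}

/-- Belief-support update. -/
def updateF (M : POMDP S A Z) (U : Finset S) (z : Z) (a : A) : Finset S :=
  univ.filter (fun t => M.obs t = z ∧ ∃ s ∈ U, 0 < M.δ s a t)

/-- Allowed actions at a belief-support `U`. -/
def AllowSet (M : POMDP S A Z) (T : Set S) (U : Finset S) : Set A :=
  {a | ∀ z, (M.updateF U z a).Nonempty → M.updateF U z a ∈ M.BeliefWin T}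

def allowFin (M : POMDP S A Z) (T : Set S) (U : Finset S) : Finset A :=
  univ.filter (· ∈ M.AllowSet T U)

/-- The support of the initial distribution, as a belief-support. -/
def suppInitF (M : POMDP S A Z) : Finset S := univ.filter (fun s => 0 < M.init s)

/-- Belief-support after a history, starting from the initial belief-support `U0`. -/
def beliefOfFromAux (M : POMDP S A Z) (U0 : Finset S) : S → List (A × S) → Finset S
  | s, [] => U0.filter (fun t => M.obs t = M.obs s)
  | s, (a, s') :: rest => M.updateF (M.beliefOfFromAux U0 s' rest) (M.obs s) a

def beliefOfFrom (M : POMDP S A Z) (U0 : Finset S) (h : Hist S A) : Finset S :=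
  M.beliefOfFromAux U0 h.1 h.2

/-- Belief-support after a history (with the initial belief-support being
the support of the initial distribution). -/
def beliefOf (M : POMDP S A Z) (h : Hist S A) : Finset S :=
  M.beliefOfFrom M.suppInitF h

lemma beliefOfFromAux_obs (M : POMDP S A Z) (U0 : Finset S) :
    ∀ (l l' : List (A × S)) (s s' : S),
      l.map (fun p => (p.1, M.obs p.2)) = l'.map (fun p => (p.1, M.obs p.2)) →
      M.obs s = M.obs s' →
      M.beliefOfFromAux U0 s l = M.beliefOfFromAux U0 s' l'
  | [], [], s, s', _, hs => by simp [beliefOfFromAux, hs]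
  | [], (_ :: _), _, _, hmap, _ => by simp at hmap
  | (_ :: _), [], _, _, hmap, _ => by simp at hmap
  | ((a, t) :: r), ((a', t') :: r'), s, s', hmap, hs => by
      simp only [List.map_cons, List.cons.injEq, Prod.mk.injEq] at hmap
      obtain ⟨⟨ha, ht⟩, hr⟩ := hmap
      simp only [beliefOfFromAux]
      rw [M.beliefOfFromAux_obs U0 r r' t t' hr ht, hs, ha]

/-- Uniform distribution over a finite set of actions. -/
def uniformA (F : Finset A) : A → ℝ := fun a => if a ∈ F then ((F.card : ℝ))⁻¹ else 0

lemma uniformA_nonneg (F : Finset A) (a : A) : 0 ≤ uniformA F a := by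
  unfold uniformA; split_ifs <;> positivity

lemma uniformA_sum (F : Finset A) (h : F.Nonempty) : ∑ a, uniformA F a = 1 := by
  unfold uniformA
  rw [Finset.sum_ite_mem, Finset.univ_inter, Finset.sum_const, nsmul_eq_mul,
    mul_inv_cancel₀]
  exact_mod_cast Finset.card_ne_zero.mpr h

/-- The action distribution of `σ_Allow` (with initial belief-support `U0`):
uniform over the allowed actions of the current belief-support (with a
uniform fallback where no action is allowed). -/
def actAllowFrom (M : POMDP S A Z) (T : Set S) (U0 : Finset S) (h : Hist S A) : A → ℝ :=
  if (M.allowFin T (M.beliefOfFrom U0 h)).Nonempty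
  then uniformA (M.allowFin T (M.beliefOfFrom U0 h))
  else uniformA (univ : Finset A)

/-- The belief-support based strategy `σ_Allow` (tracking beliefs from `U0`). -/
def stratAllowFrom [Nonempty A] (M : POMDP S A Z) (T : Set S) (U0 : Finset S) :
    Strategy S A Z M.obs where
  act := M.actAllowFrom T U0
  act_nonneg := by
    intro h a; unfold actAllowFrom; split_ifs <;> exact uniformA_nonneg _ _
  act_sum := by
    intro h; unfold actAllowFrom; split_ifs with hne
    · exact uniformA_sum _ hne
    · exact uniformA_sum _ univ_nonempty
  obsBased := by
    intro h h' hobs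
    have : M.beliefOfFrom U0 h = M.beliefOfFrom U0 h' := by
      unfold beliefOfFrom
      exact M.beliefOfFromAux_obs U0 h.2 h'.2 h.1 h'.1
        (congrArg Prod.snd hobs) (congrArg Prod.fst hobs)
    unfold actAllowFrom
    rw [this]

/-- `σ_Allow`. -/
def stratAllow [Nonempty A] (M : POMDP S A Z) (T : Set S) : Strategy S A Z M.obs :=
  M.stratAllowFrom T M.suppInitF

/-- `T_Allow(s, U)`: the expected total cost of `σ_Allow` started in the
state `s` with the initial belief-support `U`. -/
def TAllow [Nonempty A] (M : POMDP S A Z) (T : Set S) (c : S → A → ℝ) (s : S) (U : Finset S) :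
    EReal :=
  (M.resetDirac s).Val c (M.stratAllowFrom T U)

/-- `U_Allow`: the maximal expected total cost of `σ_Allow` over all
almost-sure winning belief-supports `U` and states `s ∈ U`. -/
def UAllow [Nonempty A] (M : POMDP S A Z) (T : Set S) (c : S → A → ℝ) : EReal :=
  ⨆ U ∈ M.BeliefWin T, ⨆ s ∈ U, M.TAllow T c s U

end POMDP

namespace POMDP

variable {S A Z : Type} [Fintype S] [Fintype A] [Fintype Z]

/-- Normalization of a nonnegative function into a distribution. -/
def normalize (f : S → ℝ) : S → ℝ := fun t => f t / ∑ u, f u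

/-- Support of an information state. -/
def suppF (b : S → ℝ) : Finset S := univ.filter (fun s => b s ≠ 0)

/-- The information state (posterior distribution) after a history. -/
def infoOfAux (M : POMDP S A Z) : S → List (A × S) → S → ℝ
  | s, [] => normalize (fun t => if M.obs t = M.obs s then M.init t else 0)
  | s, (a, s') :: rest =>
      normalize (fun t => if M.obs t = M.obs s then ∑ u, M.infoOfAux s' rest u * M.δ u a t else 0)

def infoOf (M : POMDP S A Z) (h : Hist S A) : S → ℝ := M.infoOfAux h.1 h.2

lemma infoOfAux_obs (M : POMDP S A Z) :
    ∀ (l l' : List (A × S)) (s s' : S),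
      l.map (fun p => (p.1, M.obs p.2)) = l'.map (fun p => (p.1, M.obs p.2)) →
      M.obs s = M.obs s' →
      M.infoOfAux s l = M.infoOfAux s' l'
  | [], [], s, s', _, hs => by simp [infoOfAux, hs]
  | [], (_ :: _), _, _, hmap, _ => by simp at hmap
  | (_ :: _), [], _, _, hmap, _ => by simp at hmap
  | ((a, t) :: r), ((a', t') :: r'), s, s', hmap, hs => by
      simp only [List.map_cons, List.cons.injEq, Prod.mk.injEq] at hmap
      obtain ⟨⟨ha, ht⟩, hr⟩ := hmap
      simp only [infoOfAux]
      rw [M.infoOfAux_obs r r' t t' hr ht, hs, ha]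

/-- Expected one-step cost `c'(b,a)` at an information state. -/
def cinfo (c : S → A → ℝ) (b : S → ℝ) (a : A) : ℝ := ∑ s, b s * c s a

/-- Probability of observing `z` after playing `a` at information state `b`. -/
def obsProb (M : POMDP S A Z) (b : S → ℝ) (a : A) (z : Z) : ℝ :=
  ∑ t, if M.obs t = z then ∑ u, b u * M.δ u a t else 0

/-- Bayesian update of the information state `b` under action `a` and
observation `z`. -/
def postInfo (M : POMDP S A Z) (b : S → ℝ) (a : A) (z : Z) : S → ℝ :=
  normalize (fun t => if M.obs t = z then ∑ u, b u * M.δ u a t else 0)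

/-- The allowed-action-restricted finite-horizon value iteration `V*_n`. -/
def Vstar (M : POMDP S A Z) (T : Set S) (c : S → A → ℝ) : ℕ → (S → ℝ) → ℝ
  | 0, _ => 0
  | n+1, b =>
    if h : (M.allowFin T (suppF b)).Nonempty then
      (M.allowFin T (suppF b)).inf' h
        (fun a => cinfo c b a + ∑ z, M.obsProb b a z * M.Vstar T c n (M.postInfo b a z))
    else 0

/-- An allowed action attaining the minimum of the value iteration with
`n` steps remaining at information state `b`. -/
def foAct [Nonempty A] (M : POMDP S A Z) (T : Set S) (c : S → A → ℝ) : ℕ → (S → ℝ) → A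
  | 0, _ => Classical.arbitrary A
  | n+1, b =>
    if h : (M.allowFin T (suppF b)).Nonempty then
      Classical.choose (Finset.exists_mem_eq_inf' h
        (fun a => cinfo c b a + ∑ z, M.obsProb b a z * M.Vstar T c n (M.postInfo b a z)))
    else Classical.arbitrary A

/-- The action distribution of the finite-horizon optimal strategy `σFO_k`. -/
def actFO [Nonempty A] (M : POMDP S A Z) (T : Set S) (c : S → A → ℝ) (k : ℕ) (h : Hist S A) :
    A → ℝ :=
  fun a => if a = M.foAct T c (k - h.2.length) (M.infoOf h) then 1 else 0

lemma length_eq_of_obsHist {h h' : Hist S A} {O : S → Z} (he : obsHist O h = obsHist O h') :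
    h.2.length = h'.2.length := by
  have := congrArg (fun x => (Prod.snd x).length) he
  simpa [obsHist] using this

/-- The (allowed-action-restricted) finite-horizon optimal strategy `σFO_k`. -/
def stratFO [Nonempty A] (M : POMDP S A Z) (T : Set S) (c : S → A → ℝ) (k : ℕ) :
    Strategy S A Z M.obs where
  act := M.actFO T c k
  act_nonneg := by intro h a; unfold actFO; split_ifs <;> norm_num
  act_sum := by intro h; unfold actFO; simp
  obsBased := by
    intro h h' hobs
    have hlen : h.2.length = h'.2.length := length_eq_of_obsHist hobs
    have hinfo : M.infoOf h = M.infoOf h' := by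
      unfold infoOf
      exact M.infoOfAux_obs h.2 h'.2 h.1 h'.1
        (congrArg Prod.snd hobs) (congrArg Prod.fst hobs)
    unfold actFO
    rw [hlen, hinfo]

/-- The strategy `σ*_k`: play `σFO_k` for the first `k` steps, then `σ_Allow`. -/
def stratStar [Nonempty A] (M : POMDP S A Z) (T : Set S) (c : S → A → ℝ) (k : ℕ) :
    Strategy S A Z M.obs where
  act := fun h =>
    if h.2.length < k then M.actFO T c k h else M.actAllowFrom T M.suppInitF h
  act_nonneg := by
    intro h a; split_ifs with hl
    · exact (M.stratFO T c k).act_nonneg h a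
    · exact (M.stratAllowFrom T M.suppInitF).act_nonneg h a
  act_sum := by
    intro h; split_ifs with hl
    · exact (M.stratFO T c k).act_sum h
    · exact (M.stratAllowFrom T M.suppInitF).act_sum h
  obsBased := by
    intro h h' hobs
    have hlen : h.2.length = h'.2.length := length_eq_of_obsHist hobs
    rw [hlen]
    split_ifs with hl
    · exact (M.stratFO T c k).obsBased h h' hobs
    · exact (M.stratAllowFrom T M.suppInitF).obsBased h h' hobs

/-- `α_k`: the probability that `T` is not reached within the first `k`
steps when playing `σ*_k`. -/
def alphaK [Nonempty A] (M : POMDP S A Z) (T : Set S) (c : S → A → ℝ) (k : ℕ) : ℝ :=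
  1 - M.probReachBy T (M.stratStar T c k) k

end POMDP

/-! A disallowed action `a` at a belief-support `U` produces, with positive probability, an
observation `z` after which the belief-support `U' = Update(U, z, a)` is losing. Every state
of `U'` is the current state of some positive-probability history with the observation–action
sequence of the one reached, so from each of them `σ` continues with one and the same strategy
`σ'`. Since `U'` is losing, `σ'` misses `T` with some probability `ε > 0` from some `t ∈ U'`
(otherwise it would win almost surely from the uniform distribution on `U'`, an average of Dirac
distributions). As `T` is absorbing, the history leading to `t` avoids `T`, so `σ` misses `T` with
probability at least `P(history) * ε`. -/

def Hist.extend {S A : Type} (h : Hist S A) (a : A) (t : S) : Hist S A := (t, (a, h.1) :: h.2)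

namespace Strategy

variable {S A Z : Type} [Fintype A] {O : S → Z}

/-- `σ` played as if `r` were the part of the history preceding the current one. -/
def shift (σ : Strategy S A Z O) (r : List (A × S)) : Strategy S A Z O where
  act h := σ.act (h.1, h.2 ++ r)
  act_nonneg _ := σ.act_nonneg _
  act_sum _ := σ.act_sum _
  obsBased h h' he := σ.obsBased _ _ <| by
    simp only [obsHist, Prod.mk.injEq, List.map_append] at he ⊢
    exact ⟨he.1, by rw [he.2]⟩

lemma shift_eq_of_map_obs_eq (σ : Strategy S A Z O) {r r' : List (A × S)}
    (hr : r.map (fun p => (p.1, O p.2)) = r'.map (fun p => (p.1, O p.2))) :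
    σ.shift r = σ.shift r' := by
  unfold shift
  congr 1
  funext h
  exact σ.obsBased _ _ (by simp [obsHist, hr])

end Strategy

namespace POMDP

variable {S A Z : Type} [Fintype S] [Fintype A] [Fintype Z] (M : POMDP S A Z) (T : Set S)
  (σ : Strategy S A Z M.obs)

lemma hprobAux_nonneg : ∀ n s l, 0 ≤ M.hprobAux σ n s l
  | 0, s, l => by
    unfold hprobAux
    split_ifs
    exacts [M.init_nonneg s, le_rfl]
  | _ + 1, _, [] => le_rfl
  | n + 1, s, (a, s') :: rest =>
    mul_nonneg (mul_nonneg (hprobAux_nonneg n s' rest) (σ.act_nonneg _ a)) (M.δ_nonneg s' a s)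

lemma hprob_nonneg (n : ℕ) (h : Hist S A) : 0 ≤ M.hprob σ n h :=
  M.hprobAux_nonneg σ n h.1 h.2

lemma hprob_extend (n : ℕ) (h : Hist S A) (a : A) (t : S) :
    M.hprob σ (n + 1) (h.extend a t) = M.hprob σ n h * σ.act h a * M.δ h.1 a t :=
  rfl

lemma hprob_extend_pos_iff (n : ℕ) (h : Hist S A) (a : A) (t : S) :
    0 < M.hprob σ (n + 1) (h.extend a t) ↔
      0 < M.hprob σ n h ∧ 0 < σ.act h a ∧ 0 < M.δ h.1 a t := by
  have h₁ := M.hprob_nonneg σ n h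
  have h₂ := σ.act_nonneg h a
  have h₃ := M.δ_nonneg h.1 a t
  rw [hprob_extend]
  constructor
  · intro hp
    refine ⟨h₁.lt_of_ne ?_, h₂.lt_of_ne ?_, h₃.lt_of_ne ?_⟩ <;>
      rintro h0 <;> simp [← h0] at hp
  · rintro ⟨hp₁, hp₂, hp₃⟩
    positivity

lemma length_eq_of_hprob_ne_zero :
    ∀ {n : ℕ} {h : Hist S A}, M.hprob σ n h ≠ 0 → h.2.length = n
  | 0, (_, []), _ => rfl
  | 0, (_, _ :: _), hp | _ + 1, (_, []), hp => by simp [hprob, hprobAux] at hp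
  | n + 1, (s, (a, s') :: rest), hp => by
    have hp' := (M.hprob_extend_pos_iff σ n (s', rest) a s).1
      ((M.hprob_nonneg σ _ _).lt_of_ne' hp)
    simp [length_eq_of_hprob_ne_zero hp'.1.ne']

variable (S A) in
def histories (n : ℕ) : Finset (Hist S A) :=
  (Set.finite_univ.prod (List.finite_length_eq (A × S) n)).toFinset

lemma mem_histories {n : ℕ} {h : Hist S A} : h ∈ histories S A n ↔ h.2.length = n := by
  simp [histories]

lemma histories_succ (n : ℕ) :
    histories S A (n + 1) =
      (histories S A n ×ˢ (univ : Finset (A × S))).image fun q => q.1.extend q.2.1 q.2.2 := by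
  ext ⟨t, l⟩
  simp only [mem_histories, mem_image, mem_product, mem_univ, and_true, Prod.exists]
  constructor
  · rcases l with _ | ⟨⟨a, s⟩, l⟩
    · simp
    · intro hl
      exact ⟨s, l, a, t, by simpa using hl, rfl⟩
  · rintro ⟨s, l, a, t, hl, he⟩
    cases he
    simp [hl]

lemma sum_histories_succ (n : ℕ) (f : Hist S A → ℝ) :
    ∑ h ∈ histories S A (n + 1), f h =
      ∑ h ∈ histories S A n, ∑ p : A × S, f (h.extend p.1 p.2) := by
  rw [histories_succ, sum_image, sum_product]
  rintro ⟨⟨s, l⟩, a, t⟩ - ⟨⟨s', l'⟩, a', t'⟩ - he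
  simp_all [Hist.extend]

lemma sum_hprob_extend (n : ℕ) (h : Hist S A) :
    ∑ p : A × S, M.hprob σ (n + 1) (h.extend p.1 p.2) = M.hprob σ n h := by
  simp only [hprob_extend, Fintype.sum_prod_type, ← mul_sum, M.δ_sum, mul_one, σ.act_sum]

lemma sum_hprob : ∀ n, ∑ h ∈ histories S A n, M.hprob σ n h = 1
  | 0 => by
    have : histories S A 0 = univ.image fun s => (s, []) := by
      ext ⟨s, l⟩
      simp [mem_histories, eq_comm]
    rw [this, sum_image (fun _ _ _ _ he => congrArg Prod.fst he)]
    simpa [hprob, hprobAux] using M.init_sum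
  | n + 1 => by
    simp only [sum_histories_succ, sum_hprob_extend, sum_hprob n]

lemma probReachBy_eq_sum (n : ℕ) :
    M.probReachBy T σ n =
      ∑ h ∈ histories S A n, if visitsT T h then M.hprob σ n h else 0 := by
  refine tsum_eq_sum fun h hh => ?_
  have : M.hprob σ n h = 0 := by
    by_contra hne
    exact hh (mem_histories.2 (M.length_eq_of_hprob_ne_zero σ hne))
  simp [this]

lemma one_sub_probReachBy (n : ℕ) :
    1 - M.probReachBy T σ n =
      ∑ h ∈ histories S A n, if visitsT T h then 0 else M.hprob σ n h := by
  rw [probReachBy_eq_sum, ← M.sum_hprob σ n, ← sum_sub_distrib]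
  refine sum_congr rfl fun h _ => ?_
  split_ifs <;> ring

lemma visitsT_extend_iff {h : Hist S A} {a : A} {t : S} :
    visitsT T (h.extend a t) ↔ t ∈ T ∨ visitsT T h := by
  simp [visitsT, Hist.extend]

lemma probReachBy_le_one (n : ℕ) : M.probReachBy T σ n ≤ 1 := by
  rw [← sub_nonneg, one_sub_probReachBy]
  exact sum_nonneg fun h _ => ite_nonneg le_rfl (M.hprob_nonneg σ n h)

lemma probReachBy_mono : Monotone (M.probReachBy T σ) := by
  refine monotone_nat_of_le_succ fun n => sub_le_sub_iff_left (1 : ℝ) |>.1 ?_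
  rw [one_sub_probReachBy, one_sub_probReachBy, sum_histories_succ]
  refine sum_le_sum fun h _ => ?_
  by_cases hv : visitsT T h
  · simp [hv, (visitsT_extend_iff T).2 (Or.inr hv)]
  · rw [if_neg hv, ← sum_hprob_extend]
    refine sum_le_sum fun p _ => ?_
    split_ifs
    exacts [M.hprob_nonneg σ _ _, le_rfl]

lemma bddAbove_probReachBy : BddAbove (Set.range (M.probReachBy T σ)) :=
  ⟨1, Set.forall_mem_range.2 (M.probReachBy_le_one T σ)⟩

lemma probReachBy_le_probReach (n : ℕ) : M.probReachBy T σ n ≤ M.probReach T σ :=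
  le_ciSup (M.bddAbove_probReachBy T σ) n

lemma probReach_le_one : M.probReach T σ ≤ 1 :=
  ciSup_le (M.probReachBy_le_one T σ)

lemma tendsto_probReachBy : Tendsto (M.probReachBy T σ) atTop (nhds (M.probReach T σ)) :=
  tendsto_atTop_ciSup (M.probReachBy_mono T σ) (M.bddAbove_probReachBy T σ)

lemma hprobAux_reinit (U : Finset S) (hU : U.Nonempty)
    (hobs : ∀ s ∈ U, ∀ s' ∈ U, M.obs s = M.obs s') : ∀ n s l,
    (M.reinit U hU hobs).hprobAux σ n s l =
      (U.card : ℝ)⁻¹ * ∑ t ∈ U, (M.resetDirac t).hprobAux σ n s l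
  | 0, s, l => by
    simp only [hprobAux, reinit, resetDirac, uniformS]
    split_ifs <;> simp [*]
  | _ + 1, _, [] => by simp [hprobAux]
  | n + 1, s, (a, s') :: rest => by
    simp only [hprobAux]
    rw [hprobAux_reinit U hU hobs n s' rest, mul_assoc, mul_assoc, sum_mul]
    simp only [mul_assoc]
    rfl

lemma probReachBy_reinit (U : Finset S) (hU : U.Nonempty)
    (hobs : ∀ s ∈ U, ∀ s' ∈ U, M.obs s = M.obs s') (n : ℕ) :
    (M.reinit U hU hobs).probReachBy T σ n =
      (U.card : ℝ)⁻¹ * ∑ t ∈ U, (M.resetDirac t).probReachBy T σ n := by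
  set c := (U.card : ℝ)⁻¹
  calc (M.reinit U hU hobs).probReachBy T σ n
      = ∑ h ∈ histories S A n, ∑ t ∈ U,
          c * if visitsT T h then (M.resetDirac t).hprob σ n h else 0 := by
        rw [(M.reinit U hU hobs).probReachBy_eq_sum T σ n]
        refine sum_congr rfl fun h _ => ?_
        split_ifs
        · exact (M.hprobAux_reinit σ U hU hobs n h.1 h.2).trans (mul_sum _ _ _)
        · simp
    _ = c * ∑ t ∈ U, (M.resetDirac t).probReachBy T σ n := by
        rw [sum_comm, mul_sum]
        refine sum_congr rfl fun t _ => (mul_sum _ _ _).symm.trans (congrArg _ ?_)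
        exact ((M.resetDirac t).probReachBy_eq_sum T σ n).symm

lemma almostSure_reinit_of_forall_resetDirac (U : Finset S) (hU : U.Nonempty)
    (hobs : ∀ s ∈ U, ∀ s' ∈ U, M.obs s = M.obs s')
    (hwin : ∀ t ∈ U, (M.resetDirac t).AlmostSure T σ) :
    (M.reinit U hU hobs).AlmostSure T σ := by
  have hlim : Tendsto
      (fun n => (U.card : ℝ)⁻¹ * ∑ t ∈ U, (M.resetDirac t).probReachBy T σ n)
      atTop (nhds ((U.card : ℝ)⁻¹ * ∑ _t ∈ U, 1)) :=
    (tendsto_finsetSum U fun t ht =>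
      hwin t ht ▸ (M.resetDirac t).tendsto_probReachBy T σ).const_mul _
  rw [sum_const, nsmul_one, inv_mul_cancel₀ (Nat.cast_ne_zero.2 hU.card_pos.ne')] at hlim
  exact tendsto_nhds_unique ((M.reinit U hU hobs).tendsto_probReachBy T σ)
    (hlim.congr fun n => (M.probReachBy_reinit T σ U hU hobs n).symm)

lemma Absorbing.eq_of_δ_pos {M : POMDP S A Z} {T : Set S} (habs : M.Absorbing T) {t s : S}
    (ht : t ∈ T) {a : A} (hδ : 0 < M.δ t a s) : s = t := by
  by_contra hne
  have hsum := M.δ_sum t a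
  rw [← add_sum_erase _ _ (mem_univ t), habs t ht a, add_eq_left,
    sum_eq_zero_iff_of_nonneg fun s _ => M.δ_nonneg t a s] at hsum
  exact hδ.ne' (hsum s (mem_erase.2 ⟨hne, mem_univ s⟩))

lemma mem_of_visitsT_of_hprob_pos {T : Set S} (habs : M.Absorbing T) :
    ∀ {n : ℕ} {h : Hist S A}, 0 < M.hprob σ n h → visitsT T h → h.1 ∈ T
  | 0, (s, []), _, hv => hv.resolve_right (by simp)
  | 0, (_, _ :: _), hp, _ | _ + 1, (_, []), hp, _ => by simp [hprob, hprobAux] at hp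
  | n + 1, (s, (a, s') :: l), hp, hv => by
    obtain ⟨hp', -, hδ⟩ := (M.hprob_extend_pos_iff σ n (s', l) a s).1 hp
    rcases (visitsT_extend_iff (h := (s', l)) T).1 hv with hs | hv'
    · exact hs
    · have hs' : s' ∈ T := mem_of_visitsT_of_hprob_pos habs hp' hv'
      exact habs.eq_of_δ_pos hs' hδ ▸ hs'

lemma obs_eq_of_mem_beliefOf {h : Hist S A} {t : S} (ht : t ∈ M.beliefOf h) :
    M.obs t = M.obs h.1 := by
  obtain ⟨s, _ | ⟨⟨a, s'⟩, l⟩⟩ := h <;>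
    simp only [beliefOf, beliefOfFrom, beliefOfFromAux, updateF, mem_filter] at ht
  exacts [ht.2, ht.2.1]

lemma beliefOf_eq_of_obsHist_eq {h h' : Hist S A} (he : obsHist M.obs h = obsHist M.obs h') :
    M.beliefOf h = M.beliefOf h' :=
  M.beliefOfFromAux_obs _ _ _ _ _ (congrArg Prod.snd he) (congrArg Prod.fst he)

lemma mem_beliefOf_self : ∀ {n : ℕ} {h : Hist S A}, 0 < M.hprob σ n h → h.1 ∈ M.beliefOf h
  | 0, (s, []), hp => by
    simpa [beliefOf, beliefOfFrom, beliefOfFromAux, suppInitF, hprob, hprobAux] using hp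
  | 0, (_, _ :: _), hp | _ + 1, (_, []), hp => by simp [hprob, hprobAux] at hp
  | n + 1, (s, (a, s') :: l), hp => by
    obtain ⟨hp', -, hδ⟩ := (M.hprob_extend_pos_iff σ n (s', l) a s).1 hp
    simp only [beliefOf, beliefOfFrom, beliefOfFromAux, updateF, mem_filter]
    exact ⟨mem_univ s, trivial, s', mem_beliefOf_self hp', hδ⟩

lemma exists_hprob_pos_of_mem_beliefOf : ∀ {n : ℕ} {h : Hist S A} {t : S},
    0 < M.hprob σ n h → t ∈ M.beliefOf h →
      ∃ l, obsHist M.obs (t, l) = obsHist M.obs h ∧ 0 < M.hprob σ n (t, l)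
  | 0, (s, []), t, _, ht => by
    simp only [beliefOf, beliefOfFrom, beliefOfFromAux, suppInitF, mem_filter] at ht
    exact ⟨[], by simp [obsHist, ht.2], by simpa [hprob, hprobAux] using ht.1.2⟩
  | 0, (_, _ :: _), _, hp, _ | _ + 1, (_, []), _, hp, _ => by simp [hprob, hprobAux] at hp
  | n + 1, (s, (a, s') :: l), t, hp, ht => by
    obtain ⟨hp', ha, -⟩ := (M.hprob_extend_pos_iff σ n (s', l) a s).1 hp
    simp only [beliefOf, beliefOfFrom, beliefOfFromAux, updateF, mem_filter] at ht
    obtain ⟨-, hts, u, hu, hδ⟩ := ht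
    obtain ⟨l', hobs, hp''⟩ := exists_hprob_pos_of_mem_beliefOf hp' hu
    refine ⟨(a, u) :: l', ?_, (M.hprob_extend_pos_iff σ n (u, l') a t).2
      ⟨hp'', σ.obsBased _ _ hobs ▸ ha, hδ⟩⟩
    simp only [obsHist, Prod.mk.injEq] at hobs ⊢
    simp [hts, hobs]

lemma exists_hprob_pos_beliefOf_eq_updateF {n : ℕ} {h : Hist S A} {a : A} {z : Z}
    (hp : 0 < M.hprob σ n h) (ha : 0 < σ.act h a)
    (hne : (M.updateF (M.beliefOf h) z a).Nonempty) :
    ∃ h', 0 < M.hprob σ (n + 1) h' ∧ M.beliefOf h' = M.updateF (M.beliefOf h) z a := by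
  obtain ⟨t, ht⟩ := hne
  simp only [updateF, mem_filter] at ht
  obtain ⟨-, rfl, s, hs, hδ⟩ := ht
  obtain ⟨l, hobs, hpl⟩ := M.exists_hprob_pos_of_mem_beliefOf σ hp hs
  refine ⟨Hist.extend (s, l) a t, (M.hprob_extend_pos_iff σ n (s, l) a t).2
    ⟨hpl, σ.obsBased _ _ hobs ▸ ha, hδ⟩, ?_⟩
  rw [← M.beliefOf_eq_of_obsHist_eq hobs]
  rfl

lemma almostSure_resetDirac_of_mem {t : S} (ht : t ∈ T) :
    (M.resetDirac t).AlmostSure T σ := by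
  have h0 : 1 - (M.resetDirac t).probReachBy T σ 0 = 0 := by
    rw [(M.resetDirac t).one_sub_probReachBy T σ 0]
    refine sum_eq_zero fun ⟨s, l⟩ hl => ?_
    obtain rfl : l = [] := List.length_eq_zero_iff.1 (mem_histories.1 hl)
    by_cases hs : s = t
    · simp [visitsT, hs, ht]
    · simp [hprob, hprobAux, resetDirac, hs]
  exact le_antisymm ((M.resetDirac t).probReach_le_one T σ)
    (by linarith [(M.resetDirac t).probReachBy_le_probReach T σ 0])

lemma hprobAux_resetDirac_shift_mul_le (t : S) (r : List (A × S)) (k : ℕ) : ∀ m s l,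
    (M.resetDirac t).hprobAux (σ.shift r) m s l * M.hprobAux σ k t r ≤
      M.hprobAux σ (k + m) s (l ++ r)
  | 0, s, [] => by
    by_cases hs : s = t
    · simp [hprobAux, resetDirac, hs]
    · simpa [hprobAux, resetDirac, hs] using M.hprobAux_nonneg σ k s r
  | 0, s, _ :: _ => by simpa [hprobAux] using M.hprobAux_nonneg σ _ s _
  | _ + 1, s, [] => (zero_mul _).trans_le (M.hprobAux_nonneg σ _ s _)
  | m + 1, s, (a, s') :: l => by
    calc (M.resetDirac t).hprobAux (σ.shift r) m s' l * σ.act (s', l ++ r) a * M.δ s' a s *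
          M.hprobAux σ k t r
        = (M.resetDirac t).hprobAux (σ.shift r) m s' l * M.hprobAux σ k t r *
            (σ.act (s', l ++ r) a * M.δ s' a s) := by ring
      _ ≤ M.hprobAux σ (k + m) s' (l ++ r) * (σ.act (s', l ++ r) a * M.δ s' a s) :=
        mul_le_mul_of_nonneg_right (hprobAux_resetDirac_shift_mul_le t r k m s' l)
          (mul_nonneg (σ.act_nonneg _ a) (M.δ_nonneg s' a s))
      _ = M.hprobAux σ (k + (m + 1)) s ((a, s') :: l ++ r) := by
        simp only [hprobAux, List.cons_append, mul_assoc]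
        rfl

lemma hprob_mul_one_sub_probReachBy_le (t : S) {r : List (A × S)} (hr : ∀ p ∈ r, p.2 ∉ T)
    (m : ℕ) :
    M.hprob σ r.length (t, r) * (1 - (M.resetDirac t).probReachBy T (σ.shift r) m) ≤
      1 - M.probReachBy T σ (r.length + m) := by
  set C := M.hprob σ r.length (t, r)
  let append : Hist S A → Hist S A := fun τ => (τ.1, τ.2 ++ r)
  have hvisits : ∀ τ, ¬ visitsT T τ → ¬ visitsT T (append τ) := by
    rintro ⟨s, l⟩ hv (hs | ⟨p, hp, hpT⟩)
    · exact hv (Or.inl hs)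
    · rcases List.mem_append.1 hp with hp | hp
      exacts [hv (Or.inr ⟨p, hp, hpT⟩), hr p hp hpT]
  have hinj : Function.Injective append := fun τ τ' he => by
    simp only [append, Prod.mk.injEq, List.append_cancel_right_eq] at he
    exact Prod.ext he.1 he.2
  rw [(M.resetDirac t).one_sub_probReachBy T (σ.shift r) m, one_sub_probReachBy, mul_sum]
  calc ∑ τ ∈ histories S A m,
        C * (if visitsT T τ then 0 else (M.resetDirac t).hprob (σ.shift r) m τ)
      ≤ ∑ τ ∈ histories S A m,
          if visitsT T (append τ) then 0 else M.hprob σ (r.length + m) (append τ) := by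
        refine sum_le_sum fun τ _ => ?_
        by_cases hv : visitsT T τ
        · rw [if_pos hv, mul_zero]
          exact ite_nonneg le_rfl (M.hprob_nonneg σ _ _)
        · rw [if_neg hv, if_neg (hvisits τ hv), mul_comm]
          exact M.hprobAux_resetDirac_shift_mul_le σ t r r.length m τ.1 τ.2
    _ = ∑ h ∈ (histories S A m).image append,
          if visitsT T h then 0 else M.hprob σ (r.length + m) h := by
        rw [sum_image fun τ _ τ' _ he => hinj he]
    _ ≤ ∑ h ∈ histories S A (r.length + m),
          if visitsT T h then 0 else M.hprob σ (r.length + m) h := by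
        refine sum_le_sum_of_subset_of_nonneg (fun h hh => ?_) fun h _ _ => ?_
        · obtain ⟨τ, hτ, rfl⟩ := mem_image.1 hh
          simp [append, mem_histories.1 hτ, mem_histories, add_comm]
        · exact ite_nonneg le_rfl (M.hprob_nonneg σ _ _)

theorem not_almostSure_of_not_almostSure_shift {T : Set S} (habs : M.Absorbing T) {n : ℕ} {t : S}
    {r : List (A × S)} (hp : 0 < M.hprob σ n (t, r))
    (hfail : ¬ (M.resetDirac t).AlmostSure T (σ.shift r)) : ¬ M.AlmostSure T σ := by
  obtain rfl : r.length = n := M.length_eq_of_hprob_ne_zero σ hp.ne'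
  have ht : t ∉ T := fun ht => hfail (M.almostSure_resetDirac_of_mem T _ ht)
  have hr : ∀ p ∈ r, p.2 ∉ T := fun p hp' hpT =>
    ht (M.mem_of_visitsT_of_hprob_pos σ habs hp (Or.inr ⟨p, hp', hpT⟩))
  set ε := 1 - (M.resetDirac t).probReach T (σ.shift r)
  have hε : 0 < ε := sub_pos.2 (((M.resetDirac t).probReach_le_one T _).lt_of_ne hfail)
  have hbound : ∀ N, M.probReachBy T σ N ≤ 1 - M.hprob σ r.length (t, r) * ε := fun N =>
    calc M.probReachBy T σ N ≤ M.probReachBy T σ (r.length + N) :=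
          M.probReachBy_mono T σ (Nat.le_add_left N r.length)
      _ ≤ 1 - M.hprob σ r.length (t, r) *
            (1 - (M.resetDirac t).probReachBy T (σ.shift r) N) := by
          linarith [M.hprob_mul_one_sub_probReachBy_le T σ t hr N]
      _ ≤ 1 - M.hprob σ r.length (t, r) * ε := by
          refine sub_le_sub_left (mul_le_mul_of_nonneg_left ?_ hp.le) 1
          linarith [(M.resetDirac t).probReachBy_le_probReach T (σ.shift r) N]
  intro hwin
  have hle : M.probReach T σ ≤ 1 - M.hprob σ r.length (t, r) * ε := ciSup_le hbound
  unfold AlmostSure at hwin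
  linarith [mul_pos hp hε]

theorem not_almostSure_of_beliefOf_not_mem_beliefWin {T : Set S} (habs : M.Absorbing T)
    {n : ℕ} {h : Hist S A} (hp : 0 < M.hprob σ n h) (hlose : M.beliefOf h ∉ M.BeliefWin T) :
    ¬ M.AlmostSure T σ := by
  obtain ⟨t, ht, hfail⟩ :
      ∃ t ∈ M.beliefOf h, ¬ (M.resetDirac t).AlmostSure T (σ.shift h.2) := by
    by_contra! hwin
    have hobs : ∀ s ∈ M.beliefOf h, ∀ s' ∈ M.beliefOf h, M.obs s = M.obs s' :=
      fun s hs s' hs' => (M.obs_eq_of_mem_beliefOf hs).trans (M.obs_eq_of_mem_beliefOf hs').symm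
    exact hlose ⟨⟨h.1, M.mem_beliefOf_self σ hp⟩, hobs, σ.shift h.2,
      M.almostSure_reinit_of_forall_resetDirac T _ _ _ hobs hwin⟩
  obtain ⟨l, hobs, hpl⟩ := M.exists_hprob_pos_of_mem_beliefOf σ hp ht
  rw [← σ.shift_eq_of_map_obs_eq (congrArg Prod.snd hobs)] at hfail
  exact M.not_almostSure_of_not_almostSure_shift σ habs hpl hfail

end POMDP

theorem not_almostSure_of_plays_disallowed_general
    {S A Z : Type} [Fintype S] [Fintype A] [Fintype Z]
    (M : POMDP S A Z) (T : Set S)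
    (habs : M.Absorbing T)
    (σ : Strategy S A Z M.obs)
    (hbad : ∃ (n : ℕ) (h : Hist S A), 0 < M.hprob σ n h ∧
      M.beliefOf h ∈ M.BeliefWin T ∧
      ∃ a, a ∉ M.AllowSet T (M.beliefOf h) ∧ 0 < σ.act h a) :
    ¬ M.AlmostSure T σ := by
  obtain ⟨n, h, hp, -, a, hdisallowed, ha⟩ := hbad
  obtain ⟨z, hne, hlose⟩ : ∃ z, (M.updateF (M.beliefOf h) z a).Nonempty ∧
      M.updateF (M.beliefOf h) z a ∉ M.BeliefWin T := by
    simpa [POMDP.AllowSet] using hdisallowed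
  obtain ⟨h', hp', hbelief⟩ := M.exists_hprob_pos_beliefOf_eq_updateF σ hp ha hne
  exact M.not_almostSure_of_beliefOf_not_mem_beliefWin σ habs hp' (hbelief ▸ hlose)

/-- If, with positive probability, a strategy `σ` reaches a
history whose belief-support `U` is almost-sure winning and plays there some
action outside `Allow(U)` with positive probability, then `σ` is not
almost-sure winning for `Reach(T)`. -/
theorem not_almostSure_of_plays_disallowed
    {S A Z : Type} [Fintype S] [Fintype A] [Fintype Z]
    (M : POMDP S A Z) (T : Set S)
    (habs : M.Absorbing T)
    (hinit : M.suppInitF ∈ M.BeliefWin T)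
    (σ : Strategy S A Z M.obs)
    (hbad : ∃ (n : ℕ) (h : Hist S A), 0 < M.hprob σ n h ∧
      M.beliefOf h ∈ M.BeliefWin T ∧
      ∃ a, a ∉ M.AllowSet T (M.beliefOf h) ∧ 0 < σ.act h a) :
    ¬ M.AlmostSure T σ :=
  not_almostSure_of_plays_disallowed_general M T habs σ hbad
end
end
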